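/- Lindenbaum lemma for QRC₁: let Σ be a finite signature whose set of constants is C, and let Φ be a finite set of closed formulas in the language of Σ with |C| > 2·cdepth(Φ) + 2·udepth(Φ). If p ⊆ Cl_C(Φ) is a closed consistent pair whose positive part p⁺ is a singleton, then there is a pair q ⊇ p in the language of Σ such that q is Cl_C(Φ)-maximal, consistent, and fully witnessed, and mdepth(q⁺) = mdepth(p⁺). -/

import Mathlib

/-!
The required pair splits `Cl(Φ)` into the consequences and the non-consequences of the single
positive formula `φ₀`. Maximality and consistency are then immediate, derivations do not raise
modal depth, and closedness is inherited from `Φ`. For full witnessing, suppose `φ₀ ⊬ ∀x φ`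
while `φ₀ ⊢ φ[x/c]` for a constant `c` occurring neither in `φ₀` nor in `φ`: renaming `x` to a
fresh variable and generalizing on `c` gives `φ₀ ⊢ ∀x φ`. Such a constant exists since each
formula of `Cl(Φ)` has at most `cdepth(Φ) + udepth(Φ)` constants (every instantiated quantifier
adds at most one), so `φ₀` and `φ` together use fewer than `|C|`.
-/

namespace QRC1

/-- Strictly positive formulas of QRC₁ over a signature with constants `Cst`,
relation symbols `Rl`, and arity function `ar`.  Terms are either variables
(natural numbers, left) or constants (right). -/
inductive Fml (Cst Rl : Type) (ar : Rl → ℕ) : Type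
  | top : Fml Cst Rl ar
  | rel (S : Rl) (ts : Fin (ar S) → ℕ ⊕ Cst) : Fml Cst Rl ar
  | and (φ ψ : Fml Cst Rl ar) : Fml Cst Rl ar
  | dia (φ : Fml Cst Rl ar) : Fml Cst Rl ar
  | all (x : ℕ) (φ : Fml Cst Rl ar) : Fml Cst Rl ar

namespace Fml

variable {Cst Rl : Type} {ar : Rl → ℕ}

/-- Free variables of a formula. -/
def fv : Fml Cst Rl ar → Set ℕ
  | .top => ∅
  | .rel _ ts => {x | ∃ i, ts i = Sum.inl x}
  | .and φ ψ => fv φ ∪ fv ψ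
  | .dia φ => fv φ
  | .all y φ => fv φ \ {y}

/-- A formula is closed when it has no free variables. -/
def Closed (φ : Fml Cst Rl ar) : Prop := φ.fv = ∅

/-- Constants occurring in a formula. -/
def consts : Fml Cst Rl ar → Set Cst
  | .top => ∅
  | .rel _ ts => {c | ∃ i, ts i = Sum.inr c}
  | .and φ ψ => consts φ ∪ consts ψ
  | .dia φ => consts φ
  | .all _ φ => consts φ

/-- Substitution of a term for a variable, on terms. -/
def substT (x : ℕ) (t : ℕ ⊕ Cst) : ℕ ⊕ Cst → ℕ ⊕ Cst
  | .inl y => if y = x then t else .inl y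
  | .inr c => .inr c

/-- `φ.subst x t` replaces all free occurrences of variable `x` in `φ` by the term `t`. -/
def subst : Fml Cst Rl ar → ℕ → (ℕ ⊕ Cst) → Fml Cst Rl ar
  | .top, _, _ => .top
  | .rel S ts, x, t => .rel S (fun i => substT x t (ts i))
  | .and φ ψ, x, t => .and (φ.subst x t) (ψ.subst x t)
  | .dia φ, x, t => .dia (φ.subst x t)
  | .all y φ, x, t => if y = x then .all y φ else .all y (φ.subst x t)

/-- `FreeFor t x φ`: the term `t` is free for the variable `x` in `φ`, i.e. no
free occurrence of a variable of `t` becomes bound in `φ[x/t]`. -/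
def FreeFor (t : ℕ ⊕ Cst) (x : ℕ) : Fml Cst Rl ar → Prop
  | .top => True
  | .rel _ _ => True
  | .and φ ψ => FreeFor t x φ ∧ FreeFor t x ψ
  | .dia φ => FreeFor t x φ
  | .all y φ => x ∉ fv (Fml.all y φ) ∨ (t ≠ .inl y ∧ FreeFor t x φ)

/-- Modal depth. -/
def mdepth : Fml Cst Rl ar → ℕ
  | .top => 0
  | .rel _ _ => 0
  | .and φ ψ => max φ.mdepth ψ.mdepth
  | .dia φ => φ.mdepth + 1
  | .all _ φ => φ.mdepth

/-- Quantifier depth. -/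
def udepth : Fml Cst Rl ar → ℕ
  | .top => 0
  | .rel _ _ => 0
  | .and φ ψ => max φ.udepth ψ.udepth
  | .dia φ => φ.udepth
  | .all _ φ => φ.udepth + 1

/-- Number of distinct constants occurring in a formula. -/
noncomputable def cdepth (φ : Fml Cst Rl ar) : ℕ := φ.consts.ncard

/-- Size of a formula (for termination purposes). -/
def size : Fml Cst Rl ar → ℕ
  | .top => 1
  | .rel _ _ => 1
  | .and φ ψ => φ.size + ψ.size + 1
  | .dia φ => φ.size + 1
  | .all _ φ => φ.size + 1

theorem size_subst (φ : Fml Cst Rl ar) (x : ℕ) (t : ℕ ⊕ Cst) :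
    (φ.subst x t).size = φ.size := by
  induction φ generalizing x t with
  | top => rfl
  | rel S ts => rfl
  | and φ ψ ihφ ihψ => simp [subst, size, ihφ, ihψ]
  | dia φ ih => simp [subst, size, ih]
  | all y φ ih => by_cases h : y = x <;> simp [subst, h, size, ih]

/-- The closure of a formula under a set of constants `C`, where the
subformulas of `∀x φ` are all `φ[x/c]` for `c ∈ C`. -/
def cl (C : Set Cst) : Fml Cst Rl ar → Set (Fml Cst Rl ar)
  | .top => {.top}
  | .rel S ts => {.rel S ts, .top}
  | .and φ ψ => {.and φ ψ} ∪ φ.cl C ∪ ψ.cl C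
  | .dia φ => {.dia φ} ∪ φ.cl C
  | .all x φ => {.all x φ} ∪ ⋃ c ∈ C, (φ.subst x (.inr c)).cl C
termination_by φ => φ.size
decreasing_by all_goals (simp [size, size_subst]; try omega)

/-- Renaming of constants along a map `f` (used for signature extensions). -/
def mapC {Cst' : Type} (f : Cst → Cst') : Fml Cst Rl ar → Fml Cst' Rl ar
  | .top => .top
  | .rel S ts => .rel S (fun i => Sum.map id f (ts i))
  | .and φ ψ => .and (φ.mapC f) (ψ.mapC f)
  | .dia φ => .dia (φ.mapC f)
  | .all x φ => .all x (φ.mapC f)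

/-- Simultaneous substitution of terms for variables. -/
def msubst (σ : ℕ → ℕ ⊕ Cst) : Fml Cst Rl ar → Fml Cst Rl ar
  | .top => .top
  | .rel S ts => .rel S (fun i => match ts i with
      | .inl x => σ x
      | .inr c => .inr c)
  | .and φ ψ => .and (φ.msubst σ) (ψ.msubst σ)
  | .dia φ => .dia (φ.msubst σ)
  | .all x φ => .all x (φ.msubst (Function.update σ x (.inl x)))

/-- `φ^g`: replace every free variable `x` of `φ` by the constant `g x`. -/
def capp (g : ℕ → Cst) (φ : Fml Cst Rl ar) : Fml Cst Rl ar :=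
  φ.msubst (fun x => .inr (g x))

end Fml

/-- The derivability relation `φ ⊢ ψ` of the calculus QRC₁. -/
inductive Der {Cst Rl : Type} {ar : Rl → ℕ} : Fml Cst Rl ar → Fml Cst Rl ar → Prop
  | top (φ) : Der φ .top
  | refl (φ) : Der φ φ
  | andE1 (φ ψ) : Der (.and φ ψ) φ
  | andE2 (φ ψ) : Der (.and φ ψ) ψ
  | andI {φ ψ χ} : Der φ ψ → Der φ χ → Der φ (.and ψ χ)
  | cut {φ ψ χ} : Der φ ψ → Der ψ χ → Der φ χ
  | diaMono {φ ψ} : Der φ ψ → Der (.dia φ) (.dia ψ)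
  | diaTrans (φ) : Der (.dia (.dia φ)) (.dia φ)
  | allI {φ ψ} (x) : Der φ ψ → x ∉ φ.fv → Der φ (.all x ψ)
  | allE {φ ψ} (x) (t : ℕ ⊕ Cst) : Der (φ.subst x t) ψ → Fml.FreeFor t x φ →
      Der (.all x φ) ψ
  | inst {φ ψ} (x) (t : ℕ ⊕ Cst) : Der φ ψ → Fml.FreeFor t x φ → Fml.FreeFor t x ψ →
      Der (φ.subst x t) (ψ.subst x t)
  | genC {φ ψ} (x) (c : Cst) : Der (φ.subst x (.inr c)) (ψ.subst x (.inr c)) →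
      c ∉ φ.consts → c ∉ ψ.consts → Der φ ψ

section Depths

variable {Cst Rl : Type} {ar : Rl → ℕ}

/-- Modal depth of a set of formulas (the supremum of the modal depths). -/
noncomputable def mdepthSet (Γ : Set (Fml Cst Rl ar)) : ℕ := sSup (Fml.mdepth '' Γ)

/-- Quantifier depth of a set of formulas. -/
noncomputable def udepthSet (Γ : Set (Fml Cst Rl ar)) : ℕ := sSup (Fml.udepth '' Γ)

/-- Maximum number of distinct constants per formula in a set of formulas. -/
noncomputable def cdepthSet (Γ : Set (Fml Cst Rl ar)) : ℕ := sSup (Fml.cdepth '' Γ)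

/-- Closure of a set of formulas under a set of constants. -/
def clSet (C : Set Cst) (Γ : Set (Fml Cst Rl ar)) : Set (Fml Cst Rl ar) :=
  ⋃ γ ∈ Γ, γ.cl C

/-- Conjunction of a finite list of formulas. -/
def conjList : List (Fml Cst Rl ar) → Fml Cst Rl ar
  | [] => .top
  | φ :: L => .and φ (conjList L)

end Depths

/-- A pair `⟨p⁺, p⁻⟩` of sets of formulas. -/
structure Pair (Cst Rl : Type) (ar : Rl → ℕ) where
  pos : Set (Fml Cst Rl ar)
  neg : Set (Fml Cst Rl ar)

namespace Pair

variable {Cst Rl : Type} {ar : Rl → ℕ}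

/-- All formulas of the pair are closed. -/
def ClosedP (p : Pair Cst Rl ar) : Prop := ∀ φ ∈ p.pos ∪ p.neg, φ.Closed

/-- Consistency: the conjunction of (finitely many formulas of) `p⁺` does not
derive any formula of `p⁻`. -/
def Consistent (p : Pair Cst Rl ar) : Prop :=
  ∀ δ ∈ p.neg, ∀ L : List (Fml Cst Rl ar), (∀ χ ∈ L, χ ∈ p.pos) → ¬ Der (conjList L) δ

/-- `Φ`-maximality: every formula of `Φ` is in `p⁺` or in `p⁻`, and `p`
contains only formulas of `Φ`. -/
def MaximalIn (Φ : Set (Fml Cst Rl ar)) (p : Pair Cst Rl ar) : Prop :=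
  (∀ χ ∈ Φ, χ ∈ p.pos ∨ χ ∈ p.neg) ∧ p.pos ∪ p.neg ⊆ Φ

/-- Fully witnessed: every negative universal has a constant witness. -/
def FullyWitnessed (p : Pair Cst Rl ar) : Prop :=
  ∀ (x : ℕ) (φ : Fml Cst Rl ar), Fml.all x φ ∈ p.neg →
    ∃ c : Cst, φ.subst x (.inr c) ∈ p.neg

/-- `Φ`-maximal, consistent, fully witnessed (and closed) pair. -/
def MCW (Φ : Set (Fml Cst Rl ar)) (p : Pair Cst Rl ar) : Prop :=
  p.ClosedP ∧ p.MaximalIn Φ ∧ p.Consistent ∧ p.FullyWitnessed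

end Pair

/-- The relation `R̂` between pairs. -/
def hatR {Cst Rl : Type} {ar : Rl → ℕ} (p q : Pair Cst Rl ar) : Prop :=
  (∀ φ : Fml Cst Rl ar, Fml.dia φ ∈ p.neg → φ ∈ q.neg ∧ Fml.dia φ ∈ q.neg) ∧
  ∃ ψ : Fml Cst Rl ar, Fml.dia ψ ∈ p.pos ∧ Fml.dia ψ ∈ q.neg

/-- A relational model for QRC₁. -/
structure Model (Cst Rl : Type) (ar : Rl → ℕ) where
  W : Type
  R : W → W → Prop
  Dom : W → Type
  finDom : ∀ w, Finite (Dom w)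
  η : ∀ w v, R w v → Dom w → Dom v
  I : ∀ w, Cst → Dom w
  J : ∀ w (S : Rl), Set (Fin (ar S) → Dom w)

namespace Model

variable {Cst Rl : Type} {ar : Rl → ℕ} (M : Model Cst Rl ar)

/-- Value of a term under a `w`-assignment. -/
def tval {w : M.W} (g : ℕ → M.Dom w) : ℕ ⊕ Cst → M.Dom w
  | .inl x => g x
  | .inr c => M.I w c

/-- Kripke satisfaction `M, w ⊩^g φ`. -/
def Sat : (w : M.W) → (g : ℕ → M.Dom w) → Fml Cst Rl ar → Prop
  | _, _, .top => True
  | w, g, .rel S ts => (fun i => M.tval g (ts i)) ∈ M.J w S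
  | w, g, .and φ ψ => Sat w g φ ∧ Sat w g ψ
  | w, g, .dia φ => ∃ (v : M.W) (h : M.R w v), Sat v (fun n => M.η w v h (g n)) φ
  | w, g, .all x φ => ∀ h : ℕ → M.Dom w, (∀ y, y ≠ x → h y = g y) → Sat w h φ

/-- Adequate models: transitive accessibility, transitive `η` functions, and
concordant interpretation of constants. -/
structure Adequate : Prop where
  trans : Transitive M.R
  etaTrans : ∀ {w u v : M.W} (h1 : M.R w u) (h2 : M.R u v) (h3 : M.R w v),
    M.η w v h3 = M.η u v h2 ∘ M.η w u h1
  concord : ∀ {w u : M.W} (h : M.R w u) (c : Cst), M.I u c = M.η w u h (M.I w c)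

/-- Constant domain: all worlds have the same domain. -/
def ConstantDomain : Prop := ∀ w v : M.W, M.Dom w = M.Dom v

end Model

namespace Fml

variable {Cst Rl : Type} {ar : Rl → ℕ}

def vars : Fml Cst Rl ar → Set ℕ
  | .top => ∅
  | .rel _ ts => {x | ∃ i, ts i = Sum.inl x}
  | .and φ ψ => vars φ ∪ vars ψ
  | .dia φ => vars φ
  | .all y φ => vars φ ∪ {y}

theorem finite_vars (φ : Fml Cst Rl ar) : φ.vars.Finite := by
  induction φ with
  | top => exact Set.finite_empty
  | rel S ts =>
    exact ((Set.finite_range ts).preimage Sum.inl_injective.injOn).subset fun _ ⟨i, hi⟩ => ⟨i, hi⟩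
  | and φ ψ ihφ ihψ => exact ihφ.union ihψ
  | dia φ ih => exact ih
  | all y φ ih => exact ih.union (Set.finite_singleton y)

theorem fv_subset_vars (φ : Fml Cst Rl ar) : φ.fv ⊆ φ.vars := by
  induction φ with
  | top | rel => exact subset_rfl
  | and φ ψ ihφ ihψ => exact Set.union_subset_union ihφ ihψ
  | dia φ ih => exact ih
  | all y φ ih => exact fun z hz => Or.inl (ih hz.1)

theorem finite_consts (φ : Fml Cst Rl ar) : φ.consts.Finite := by
  induction φ with
  | top => exact Set.finite_empty
  | rel S ts =>
    exact ((Set.finite_range ts).preimage Sum.inr_injective.injOn).subset fun _ ⟨i, hi⟩ => ⟨i, hi⟩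
  | and φ ψ ihφ ihψ => exact ihφ.union ihψ
  | dia φ ih | all _ φ ih => exact ih

theorem subst_of_notMem_fv {φ : Fml Cst Rl ar} {x : ℕ} (t : ℕ ⊕ Cst) (h : x ∉ φ.fv) :
    φ.subst x t = φ := by
  induction φ with
  | top => rfl
  | rel S ts =>
    refine congrArg _ (funext fun i => ?_)
    rcases hts : ts i with y | c
    · have hyx : y ≠ x := by rintro rfl; exact h ⟨i, hts⟩
      simp [substT, hyx]
    · rfl
  | and φ ψ ihφ ihψ =>
    simp only [subst, ihφ fun hx => h (Or.inl hx), ihψ fun hx => h (Or.inr hx)]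
  | dia φ ih => simp only [subst, ih h]
  | all y φ ih =>
    by_cases hyx : y = x
    · simp [subst, hyx]
    · simp only [subst, if_neg hyx]
      rw [ih fun hx => h ⟨hx, fun hxy => hyx (Set.mem_singleton_iff.mp hxy).symm⟩]

theorem subst_self (φ : Fml Cst Rl ar) (x : ℕ) : φ.subst x (.inl x) = φ := by
  induction φ with
  | top => rfl
  | rel S ts =>
    refine congrArg _ (funext fun i => ?_)
    rcases ts i with y | c
    · by_cases hyx : y = x <;> simp [substT, hyx]
    · rfl
  | and φ ψ ihφ ihψ => simp only [subst, ihφ, ihψ]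
  | dia φ ih => simp only [subst, ih]
  | all y φ ih => by_cases h : y = x <;> simp [subst, h, ih]

theorem subst_subst_of_notMem_vars {φ : Fml Cst Rl ar} {y : ℕ} (x : ℕ) (t : ℕ ⊕ Cst)
    (hy : y ∉ φ.vars) : (φ.subst x (.inl y)).subst y t = φ.subst x t := by
  induction φ generalizing x with
  | top => rfl
  | rel S ts =>
    refine congrArg _ (funext fun i => ?_)
    rcases hts : ts i with z | c
    · have hzy : z ≠ y := by rintro rfl; exact hy ⟨i, hts⟩
      by_cases hzx : z = x <;> simp [hts, substT, hzx, hzy]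
    · simp [hts, substT]
  | and φ ψ ihφ ihψ =>
    simp only [subst, ihφ x fun h => hy (Or.inl h), ihψ x fun h => hy (Or.inr h)]
  | dia φ ih => simp only [subst, ih x hy]
  | all z φ ih =>
    have hyφ : y ∉ φ.vars := fun h => hy (Or.inl h)
    have hzy : z ≠ y := by rintro rfl; exact hy (Or.inr rfl)
    by_cases hzx : z = x
    · subst hzx
      simp only [subst, if_true, if_neg hzy,
        subst_of_notMem_fv t fun h => hyφ (fv_subset_vars φ h)]
    · simp only [subst, if_neg hzx, if_neg hzy, ih x hyφ]

theorem fv_subst_inr (φ : Fml Cst Rl ar) (x : ℕ) (c : Cst) :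
    (φ.subst x (.inr c)).fv = φ.fv \ {x} := by
  induction φ with
  | top => simp [subst, fv]
  | rel S ts =>
    ext z
    simp only [subst, fv, Set.mem_ofPred_eq, Set.mem_sdiff, Set.mem_singleton_iff]
    refine ⟨fun ⟨i, hi⟩ => ?_, fun ⟨⟨i, hi⟩, hzx⟩ => ⟨i, by simp [hi, substT, hzx]⟩⟩
    rcases hts : ts i with y | d
    · by_cases hyx : y = x
      · simp [hts, substT, hyx] at hi
      · simp only [hts, substT, if_neg hyx, Sum.inl.injEq] at hi
        exact ⟨⟨i, hi ▸ hts⟩, hi ▸ hyx⟩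
    · simp [hts, substT] at hi
  | and φ ψ ihφ ihψ => simp only [subst, fv, ihφ, ihψ, Set.union_sdiff_distrib]
  | dia φ ih => exact ih
  | all y φ ih =>
    by_cases hyx : y = x
    · subst hyx
      simp only [subst, if_true, fv, Set.sdiff_sdiff, Set.union_self]
    · simp only [subst, if_neg hyx, fv, ih, Set.sdiff_sdiff_comm]

theorem fv_subst_inl_subset (φ : Fml Cst Rl ar) (x y : ℕ) :
    (φ.subst x (.inl y)).fv ⊆ φ.fv \ {x} ∪ {y} := by
  induction φ with
  | top => simp [subst, fv]
  | rel S ts =>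
    rintro z ⟨i, hi⟩
    rcases hts : ts i with w | d
    · by_cases hwx : w = x
      · simp_all [substT]
      · simp only [hts, substT, if_neg hwx, Sum.inl.injEq] at hi
        exact Or.inl ⟨⟨i, hi ▸ hts⟩, hi ▸ hwx⟩
    · simp [hts, substT] at hi
  | and φ ψ ihφ ihψ =>
    rintro z (hz | hz)
    · rcases ihφ hz with h | h
      exacts [Or.inl ⟨Or.inl h.1, h.2⟩, Or.inr h]
    · rcases ihψ hz with h | h
      exacts [Or.inl ⟨Or.inr h.1, h.2⟩, Or.inr h]
  | dia φ ih => exact ih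
  | all w φ ih =>
    by_cases hwx : w = x
    · subst hwx
      simp only [subst, if_true, fv]
      rintro z ⟨hz, hzw⟩
      exact Or.inl ⟨⟨hz, hzw⟩, hzw⟩
    · simp only [subst, if_neg hwx, fv]
      rintro z ⟨hz, hzw⟩
      rcases ih hz with h | h
      exacts [Or.inl ⟨⟨h.1, hzw⟩, h.2⟩, Or.inr h]

theorem consts_subst_inl (φ : Fml Cst Rl ar) (x y : ℕ) :
    (φ.subst x (.inl y)).consts = φ.consts := by
  induction φ with
  | top => rfl
  | rel S ts =>
    ext c
    simp only [subst, consts, Set.mem_ofPred_eq]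
    refine exists_congr fun i => ?_
    rcases ts i with z | d
    · by_cases hzx : z = x <;> simp [substT, hzx]
    · rfl
  | and φ ψ ihφ ihψ => simp only [subst, consts, ihφ, ihψ]
  | dia φ ih => exact ih
  | all w φ ih => by_cases h : w = x <;> simp [subst, h, consts, ih]

theorem consts_subst_inr_subset (φ : Fml Cst Rl ar) (x : ℕ) (c : Cst) :
    (φ.subst x (.inr c)).consts ⊆ φ.consts ∪ {c} := by
  induction φ with
  | top => simp [subst, consts]
  | rel S ts =>
    rintro d ⟨i, hi⟩
    rcases hts : ts i with z | e
    · by_cases hzx : z = x <;> simp_all [substT]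
    · simp only [hts, substT, Sum.inr.injEq] at hi
      exact Or.inl ⟨i, hi ▸ hts⟩
  | and φ ψ ihφ ihψ =>
    rintro d (hd | hd)
    · rcases ihφ hd with h | h
      exacts [Or.inl (Or.inl h), Or.inr h]
    · rcases ihψ hd with h | h
      exacts [Or.inl (Or.inr h), Or.inr h]
  | dia φ ih => exact ih
  | all w φ ih =>
    by_cases hwx : w = x
    · simp only [subst, hwx, if_true, consts]
      exact Set.subset_union_left
    · simpa [subst, hwx, consts] using ih

theorem mdepth_subst (φ : Fml Cst Rl ar) (x : ℕ) (t : ℕ ⊕ Cst) :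
    (φ.subst x t).mdepth = φ.mdepth := by
  induction φ with
  | top | rel => rfl
  | and φ ψ ihφ ihψ => simp [subst, mdepth, ihφ, ihψ]
  | dia φ ih => simp [subst, mdepth, ih]
  | all y φ ih => by_cases h : y = x <;> simp [subst, h, mdepth, ih]

theorem udepth_subst (φ : Fml Cst Rl ar) (x : ℕ) (t : ℕ ⊕ Cst) :
    (φ.subst x t).udepth = φ.udepth := by
  induction φ with
  | top | rel => rfl
  | and φ ψ ihφ ihψ => simp [subst, udepth, ihφ, ihψ]
  | dia φ ih => simp [subst, udepth, ih]
  | all y φ ih => by_cases h : y = x <;> simp [subst, h, udepth, ih]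

theorem freeFor_inl_subst_inl {φ : Fml Cst Rl ar} {y : ℕ} (x : ℕ) (hy : y ∉ φ.vars) :
    FreeFor (.inl x) y (φ.subst x (.inl y)) := by
  induction φ with
  | top | rel => trivial
  | and φ ψ ihφ ihψ => exact ⟨ihφ fun h => hy (Or.inl h), ihψ fun h => hy (Or.inr h)⟩
  | dia φ ih => exact ih hy
  | all z φ ih =>
    have hyφ : y ∉ φ.vars := fun h => hy (Or.inl h)
    by_cases hzx : z = x
    · simp only [subst, hzx, if_true]
      exact Or.inl fun h => hyφ (fv_subset_vars φ h.1)
    · simp only [subst, if_neg hzx]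
      exact Or.inr ⟨fun h => hzx (Sum.inl.inj h).symm, ih hyφ⟩

theorem mem_cl_self (C : Set Cst) (φ : Fml Cst Rl ar) : φ ∈ φ.cl C := by
  cases φ <;> simp [cl]

theorem le_of_mem_cl {α : Type*} [Preorder α] (f : Fml Cst Rl ar → α) {C : Set Cst}
    (hrel : ∀ S ts, f .top ≤ f (.rel S ts))
    (hand : ∀ φ ψ, f φ ≤ f (.and φ ψ) ∧ f ψ ≤ f (.and φ ψ))
    (hdia : ∀ φ, f φ ≤ f (.dia φ))
    (hall : ∀ x φ, ∀ c ∈ C, f (φ.subst x (.inr c)) ≤ f (.all x φ)) :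
    ∀ {γ ψ : Fml Cst Rl ar}, ψ ∈ γ.cl C → f ψ ≤ f γ
  | .top, ψ, h => by
    rw [cl, Set.mem_singleton_iff] at h
    rw [h]
  | .rel S ts, ψ, h => by
    rw [cl] at h
    rcases h with rfl | rfl
    exacts [le_rfl, hrel S ts]
  | .and φ χ, ψ, h => by
    rw [cl] at h
    rcases h with (rfl | h) | h
    · exact le_rfl
    · exact (le_of_mem_cl f hrel hand hdia hall h).trans (hand φ χ).1
    · exact (le_of_mem_cl f hrel hand hdia hall h).trans (hand φ χ).2
  | .dia φ, ψ, h => by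
    rw [cl] at h
    rcases h with rfl | h
    · exact le_rfl
    · exact (le_of_mem_cl f hrel hand hdia hall h).trans (hdia φ)
  | .all x φ, ψ, h => by
    rw [cl] at h
    simp only [Set.mem_union, Set.mem_singleton_iff, Set.mem_iUnion] at h
    rcases h with rfl | ⟨c, hc, h⟩
    · exact le_rfl
    · exact (le_of_mem_cl f hrel hand hdia hall h).trans (hall x φ c hc)
termination_by γ => γ.size
decreasing_by all_goals simp only [size, size_subst]; omega

theorem cl_subset_of_mem {C : Set Cst} {γ ψ : Fml Cst Rl ar} (h : ψ ∈ γ.cl C) :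
    ψ.cl C ⊆ γ.cl C := by
  refine le_of_mem_cl (cl C) (fun S ts => ?_) (fun φ ψ => ⟨?_, ?_⟩) (fun φ => ?_)
    (fun x φ c hc => ?_) h <;> intro χ hχ <;> rw [cl]
  · exact Or.inr (by rwa [cl] at hχ)
  · exact Or.inl (Or.inr hχ)
  · exact Or.inr hχ
  · exact Or.inr hχ
  · exact Or.inr (Set.mem_biUnion hc hχ)

theorem fv_subset_of_mem_cl {C : Set Cst} {γ ψ : Fml Cst Rl ar} (h : ψ ∈ γ.cl C) :
    ψ.fv ⊆ γ.fv :=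
  le_of_mem_cl fv (fun _ _ => Set.empty_subset _)
    (fun _ _ => ⟨Set.subset_union_left, Set.subset_union_right⟩) (fun _ => subset_rfl)
    (fun x φ c _ => (fv_subst_inr φ x c).le) h

theorem cdepth_add_udepth_le_of_mem_cl {C : Set Cst} {γ ψ : Fml Cst Rl ar}
    (h : ψ ∈ γ.cl C) : ψ.cdepth + ψ.udepth ≤ γ.cdepth + γ.udepth := by
  refine le_of_mem_cl (fun φ => φ.cdepth + φ.udepth)
    (fun _ _ => by simp [cdepth, consts, udepth])
    (fun φ ψ => ?_) (fun _ => le_rfl) (fun x φ c _ => ?_) h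
  · have hφ := Set.ncard_le_ncard (Set.subset_union_left (t := ψ.consts))
      (φ.finite_consts.union ψ.finite_consts)
    have hψ := Set.ncard_le_ncard (Set.subset_union_right (s := φ.consts))
      (φ.finite_consts.union ψ.finite_consts)
    simp only [cdepth, consts, udepth] at hφ hψ ⊢
    omega
  · have hc : (φ.subst x (.inr c)).cdepth ≤ φ.cdepth + 1 :=
      calc (φ.subst x (.inr c)).consts.ncard
          ≤ (φ.consts ∪ {c}).ncard :=
            Set.ncard_le_ncard (consts_subst_inr_subset φ x c)
              (φ.finite_consts.union (Set.finite_singleton c))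
        _ ≤ φ.consts.ncard + 1 := (Set.ncard_union_le _ _).trans_eq (by rw [Set.ncard_singleton])
    simp only [cdepth, consts, udepth, udepth_subst] at hc ⊢
    omega

theorem exists_const_notMem_consts {φ ψ : Fml Cst Rl ar}
    (h : φ.cdepth + ψ.cdepth < Nat.card Cst) : ∃ c, c ∉ φ.consts ∧ c ∉ ψ.consts := by
  have hne : φ.consts ∪ ψ.consts ≠ Set.univ := by
    intro hu
    have := Set.ncard_union_le φ.consts ψ.consts
    rw [hu, Set.ncard_univ] at this
    exact absurd h (not_lt.mpr this)
  obtain ⟨c, hc⟩ := (Set.ne_univ_iff_exists_notMem _).mp hne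
  exact ⟨c, fun h => hc (Or.inl h), fun h => hc (Or.inr h)⟩

end Fml

namespace Der

variable {Cst Rl : Type} {ar : Rl → ℕ}

theorem conjList_of_forall {φ : Fml Cst Rl ar} :
    ∀ L : List (Fml Cst Rl ar), (∀ χ ∈ L, Der φ χ) → Der φ (conjList L)
  | [], _ => .top φ
  | _ :: L, h => .andI (h _ List.mem_cons_self)
      (conjList_of_forall L fun χ hχ => h χ (List.mem_cons_of_mem _ hχ))

theorem mdepth_le {φ ψ : Fml Cst Rl ar} (h : Der φ ψ) : ψ.mdepth ≤ φ.mdepth := by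
  induction h with
  | top => exact Nat.zero_le _
  | diaTrans => exact Nat.le_succ _
  | refl => exact le_rfl
  | andE1 => exact le_max_left _ _
  | andE2 => exact le_max_right _ _
  | andI _ _ ih₁ ih₂ => exact max_le ih₁ ih₂
  | cut _ _ ih₁ ih₂ => exact ih₂.trans ih₁
  | diaMono _ ih => exact Nat.succ_le_succ ih
  | allI _ _ _ ih => exact ih
  | allE _ _ _ _ ih => rwa [Fml.mdepth_subst] at ih
  | inst _ _ _ _ _ ih => rwa [Fml.mdepth_subst, Fml.mdepth_subst]
  | genC _ _ _ _ _ ih => rwa [Fml.mdepth_subst, Fml.mdepth_subst] at ih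

theorem all_rename {φ : Fml Cst Rl ar} {y : ℕ} (x : ℕ) (hy : y ∉ φ.vars) :
    Der (.all y (φ.subst x (.inl y))) (.all x φ) := by
  refine allI x (allE y (.inl x) ?_ (Fml.freeFor_inl_subst_inl x hy)) fun hx => ?_
  · rw [Fml.subst_subst_of_notMem_vars x _ hy, Fml.subst_self]
    exact refl φ
  · rcases Fml.fv_subst_inl_subset φ x y hx.1 with h | h
    exacts [h.2 rfl, hx.2 h]

theorem all_of_subst_fresh {φ₀ φ : Fml Cst Rl ar} {x : ℕ} {c : Cst}
    (hc₀ : c ∉ φ₀.consts) (hc : c ∉ φ.consts) (h : Der φ₀ (φ.subst x (.inr c))) :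
    Der φ₀ (.all x φ) := by
  obtain ⟨y, hy⟩ :=
    (φ.finite_vars.union (φ₀.finite_vars.subset φ₀.fv_subset_vars)).infinite_compl.nonempty
  have hyφ : y ∉ φ.vars := fun h => hy (Or.inl h)
  have hy₀ : y ∉ φ₀.fv := fun h => hy (Or.inr h)
  have hrenamed : Der φ₀ (φ.subst x (.inl y)) := by
    refine genC y c ?_ hc₀ (by rwa [Fml.consts_subst_inl])
    rwa [Fml.subst_subst_of_notMem_vars x _ hyφ, Fml.subst_of_notMem_fv _ hy₀]
  exact cut (allI y hrenamed hy₀) (all_rename x hyφ)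

end Der

section clSet

variable {Cst Rl : Type} {ar : Rl → ℕ} {C : Set Cst} {Φ : Set (Fml Cst Rl ar)}

theorem closed_of_mem_clSet (hΦ : ∀ φ ∈ Φ, φ.Closed) {ψ : Fml Cst Rl ar}
    (h : ψ ∈ clSet C Φ) : ψ.Closed := by
  obtain ⟨γ, hγ, hψ⟩ := Set.mem_iUnion₂.mp h
  exact Set.subset_eq_empty (Fml.fv_subset_of_mem_cl hψ) (hΦ γ hγ)

theorem subst_mem_clSet {x : ℕ} {φ : Fml Cst Rl ar} {c : Cst} (h : .all x φ ∈ clSet C Φ)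
    (hc : c ∈ C) : φ.subst x (.inr c) ∈ clSet C Φ := by
  obtain ⟨γ, hγ, hφ⟩ := Set.mem_iUnion₂.mp h
  refine Set.mem_biUnion hγ (Fml.cl_subset_of_mem hφ ?_)
  rw [Fml.cl]
  exact Or.inr (Set.mem_biUnion hc (Fml.mem_cl_self C _))

theorem cdepth_le_of_mem_clSet (hΦ : Φ.Finite) {ψ : Fml Cst Rl ar} (h : ψ ∈ clSet C Φ) :
    ψ.cdepth ≤ cdepthSet Φ + udepthSet Φ := by
  obtain ⟨γ, hγ, hψ⟩ := Set.mem_iUnion₂.mp h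
  have hc : γ.cdepth ≤ cdepthSet Φ := le_csSup (hΦ.image _).bddAbove ⟨γ, hγ, rfl⟩
  have hu : γ.udepth ≤ udepthSet Φ := le_csSup (hΦ.image _).bddAbove ⟨γ, hγ, rfl⟩
  have := Fml.cdepth_add_udepth_le_of_mem_cl hψ
  omega

end clSet

namespace Pair

variable {Cst Rl : Type} {ar : Rl → ℕ}

def consequences (Γ : Set (Fml Cst Rl ar)) (φ₀ : Fml Cst Rl ar) : Pair Cst Rl ar :=
  ⟨{ψ ∈ Γ | Der φ₀ ψ}, {ψ ∈ Γ | ¬ Der φ₀ ψ}⟩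

variable {Γ : Set (Fml Cst Rl ar)} {φ₀ : Fml Cst Rl ar}

theorem consequences_closedP (hΓ : ∀ ψ ∈ Γ, ψ.Closed) : (consequences Γ φ₀).ClosedP := by
  rintro ψ (hψ | hψ)
  exacts [hΓ ψ hψ.1, hΓ ψ hψ.1]

theorem consequences_maximalIn : (consequences Γ φ₀).MaximalIn Γ :=
  ⟨fun χ hχ => (em (Der φ₀ χ)).imp (And.intro hχ) (And.intro hχ),
    Set.union_subset (Set.sep_subset _ _) (Set.sep_subset _ _)⟩

theorem consequences_consistent : (consequences Γ φ₀).Consistent :=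
  fun _ hδ L hL hder => hδ.2 (.cut (Der.conjList_of_forall L fun χ hχ => (hL χ hχ).2) hder)

theorem consequences_fullyWitnessed
    (hinst : ∀ x φ c, .all x φ ∈ Γ → φ.subst x (.inr c) ∈ Γ)
    (hfresh : ∀ x φ, .all x φ ∈ Γ → ∃ c, c ∉ φ₀.consts ∧ c ∉ φ.consts) :
    (consequences Γ φ₀).FullyWitnessed := by
  rintro x φ ⟨hΓ, hnot⟩
  obtain ⟨c, hc₀, hc⟩ := hfresh x φ hΓ
  exact ⟨c, hinst x φ c hΓ, fun h => hnot (Der.all_of_subst_fresh hc₀ hc h)⟩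

theorem mdepthSet_consequences_pos (hφ₀ : φ₀ ∈ Γ) :
    mdepthSet (consequences Γ φ₀).pos = φ₀.mdepth :=
  IsGreatest.csSup_eq ⟨⟨φ₀, ⟨hφ₀, .refl φ₀⟩, rfl⟩, fun _ ⟨_, hψ, hd⟩ => hd ▸ hψ.2.mdepth_le⟩

end Pair

theorem lindenbaum_general (Cst Rl : Type) (ar : Rl → ℕ)
    (Φ : Set (Fml Cst Rl ar)) (hΦfin : Φ.Finite) (hΦcl : ∀ φ ∈ Φ, φ.Closed)
    (hcard : 2 * cdepthSet Φ + 2 * udepthSet Φ < Nat.card Cst)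
    (p : Pair Cst Rl ar) (hsub : p.pos ∪ p.neg ⊆ clSet Set.univ Φ)
    (hcons : p.Consistent)
    (hsing : ∃ φ₀ : Fml Cst Rl ar, p.pos = {φ₀}) :
    ∃ q : Pair Cst Rl ar, p.pos ⊆ q.pos ∧ p.neg ⊆ q.neg ∧
      q.MCW (clSet Set.univ Φ) ∧ mdepthSet q.pos = mdepthSet p.pos := by
  obtain ⟨φ₀, hpos⟩ := hsing
  have hφ₀ : φ₀ ∈ clSet Set.univ Φ := hsub (Or.inl (hpos ▸ rfl))
  have hfresh (x : ℕ) (φ : Fml Cst Rl ar) (h : .all x φ ∈ clSet Set.univ Φ) :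
      ∃ c, c ∉ φ₀.consts ∧ c ∉ φ.consts := by
    have h₀ := cdepth_le_of_mem_clSet hΦfin hφ₀
    have h₁ : φ.cdepth ≤ cdepthSet Φ + udepthSet Φ := (cdepth_le_of_mem_clSet hΦfin h :)
    exact Fml.exists_const_notMem_consts (by omega)
  refine ⟨Pair.consequences (clSet Set.univ Φ) φ₀, ?_, ?_,
    ⟨Pair.consequences_closedP fun _ => closed_of_mem_clSet hΦcl, Pair.consequences_maximalIn,
      Pair.consequences_consistent, Pair.consequences_fullyWitnessed
        (fun _ _ c h => subst_mem_clSet h (Set.mem_univ c)) hfresh⟩, ?_⟩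
  · rw [hpos, Set.singleton_subset_iff]
    exact ⟨hφ₀, .refl φ₀⟩
  · refine fun δ hδ => ⟨hsub (Or.inr hδ), fun hder => ?_⟩
    exact hcons δ hδ [φ₀] (by simp [hpos]) (.cut (.andE1 φ₀ .top) hder)
  · rw [Pair.mdepthSet_consequences_pos hφ₀, hpos]
    simp [mdepthSet]

theorem lindenbaum (Cst Rl : Type) (ar : Rl → ℕ) [Finite Cst] [Finite Rl]
    (Φ : Set (Fml Cst Rl ar)) (hΦfin : Φ.Finite) (hΦcl : ∀ φ ∈ Φ, φ.Closed)
    (hcard : 2 * cdepthSet Φ + 2 * udepthSet Φ < Nat.card Cst)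
    (p : Pair Cst Rl ar) (hsub : p.pos ∪ p.neg ⊆ clSet Set.univ Φ)
    (hclosed : p.ClosedP) (hcons : p.Consistent)
    (hsing : ∃ φ₀ : Fml Cst Rl ar, p.pos = {φ₀}) :
    ∃ q : Pair Cst Rl ar, p.pos ⊆ q.pos ∧ p.neg ⊆ q.neg ∧
      q.MCW (clSet Set.univ Φ) ∧ mdepthSet q.pos = mdepthSet p.pos :=
  lindenbaum_general Cst Rl ar Φ hΦfin hΦcl hcard p hsub hcons hsing

end QRC1
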